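/- Let n, r, s be integers with 0 ≤ r < s and r + s ≤ n. Let p = (p₀, …, p_n) ∈ ℂ^{n+1} satisfy ∑_{i=0}^{r} |p_i|² = ∑_{j=r+1}^{r+s} |p_j|² and p¹ := (p₀, …, p_r) ≠ 0. Then there exist a complex (r+1)×s matrix A₁ with A₁·A₁* = I_{r+1} and a complex (r+1)×(n−r−s) matrix A₂ such that (p_{r+1}, …, p_{r+s}) = p¹·A₁ and (p_{r+s+1}, …, p_n) = p¹·A₂. Consequently p lies in the (r+1)-dimensional complex linear subspace W = {(z, z·A₁, z·A₂) : z ∈ ℂ^{r+1}}, every vector w of which satisfies ∑_{i=0}^{r} |w_i|² = ∑_{j=r+1}^{r+s} |w_j|². -/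

import Mathlib

open Matrix

/-- The vector `(z, z·A₁, z·A₂) ∈ ℂ^{n+1}`, where `z ∈ ℂ^{r+1}`,
`A₁` is a complex `(r+1)×s` matrix and `A₂` is a complex `(r+1)×(n-r-s)` matrix. -/
noncomputable def genBallGraphVec (n r s : ℕ) (A₁ : Matrix (Fin (r + 1)) (Fin s) ℂ)
    (A₂ : Matrix (Fin (r + 1)) (Fin (n - r - s)) ℂ) (z : Fin (r + 1) → ℂ) :
    Fin (n + 1) → ℂ :=
  fun i =>
    if h1 : (i : ℕ) ≤ r then z ⟨(i : ℕ), by omega⟩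
    else if h2 : (i : ℕ) ≤ r + s then Matrix.vecMul z A₁ ⟨(i : ℕ) - (r + 1), by omega⟩
    else Matrix.vecMul z A₂ ⟨(i : ℕ) - (r + s + 1), by have := i.isLt; omega⟩

/-!
The blocks `p¹ = (p₀, …, p_r)` and `p² = (p_{r+1}, …, p_{r+s})` have the same norm, so, since
`r + 1 ≤ s`, some linear isometry `ℂ^{r+1} → ℂ^s` sends `p¹` to `p²` (send an orthonormal basis
through `p¹` to part of one through `p²`). Its matrix `A₁` has orthonormal rows, and because
`p¹ ≠ 0` the last block is `p¹ A₂` for a rank-one `A₂`. The graph `z ↦ (z, z A₁, z A₂)` is then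
an injective linear map whose image contains `p`, and `z ↦ z A₁` preserves the norm, so the
image lies in the boundary.
-/

open Module

section RCLike

variable {𝕜 : Type*} [RCLike 𝕜] {E F : Type*} [NormedAddCommGroup E] [InnerProductSpace 𝕜 E]
  [NormedAddCommGroup F] [InnerProductSpace 𝕜 F]

theorem exists_orthonormalBasis_apply_eq {ι : Type*} [Fintype ι] [FiniteDimensional 𝕜 E]
    (hcard : finrank 𝕜 E = Fintype.card ι) (i₀ : ι) {u : E} (hu : ‖u‖ = 1) :
    ∃ d : OrthonormalBasis ι 𝕜 E, d i₀ = u := by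
  have hv : Orthonormal 𝕜 (({i₀} : Set ι).domRestrict fun _ => u) := by
    rw [orthonormal_iff_ite]
    rintro ⟨i, rfl⟩ ⟨j, rfl⟩
    simp [Set.domRestrict, inner_self_eq_norm_sq_to_K, hu]
  obtain ⟨d, hd⟩ := hv.exists_orthonormalBasis_extension_of_card_eq hcard
  exact ⟨d, hd i₀ rfl⟩

theorem exists_linearIsometry_apply_eq [FiniteDimensional 𝕜 E] [FiniteDimensional 𝕜 F]
    (hEF : finrank 𝕜 E ≤ finrank 𝕜 F) {x : E} {y : F} (hx : x ≠ 0) (hxy : ‖x‖ = ‖y‖) :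
    ∃ T : E →ₗᵢ[𝕜] F, T x = y := by
  have hy : y ≠ 0 := norm_ne_zero_iff.mp (hxy ▸ norm_ne_zero_iff.mpr hx)
  let i₀ : Fin (finrank 𝕜 E) := ⟨0, finrank_pos_iff_exists_ne_zero.mpr ⟨x, hx⟩⟩
  obtain ⟨d, hd⟩ := exists_orthonormalBasis_apply_eq (𝕜 := 𝕜) (by simp) i₀
    (norm_smul_inv_norm (𝕜 := 𝕜) hx)
  obtain ⟨c, hc⟩ := exists_orthonormalBasis_apply_eq (𝕜 := 𝕜) (by simp) (Fin.castLE hEF i₀)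
    (norm_smul_inv_norm (𝕜 := 𝕜) hy)
  let f : E →ₗ[𝕜] F := d.toBasis.constr 𝕜 (c ∘ Fin.castLE hEF)
  have hfd : f ∘ d.toBasis = c ∘ Fin.castLE hEF := funext (d.toBasis.constr_basis 𝕜 _)
  have hd' : Orthonormal 𝕜 d.toBasis := by
    rw [d.coe_toBasis]
    exact d.orthonormal
  refine ⟨f.isometryOfOrthonormal hd' ?_, ?_⟩
  · rw [hfd]
    exact c.orthonormal.comp _ (Fin.castLE_injective hEF)
  · have hx' : x = (‖x‖ : 𝕜) • d.toBasis i₀ := by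
      rw [d.coe_toBasis, hd, smul_smul, mul_inv_cancel₀ (by simpa using hx), one_smul]
    change f x = y
    rw [hx', map_smul, d.toBasis.constr_basis, Function.comp_apply, hc, hxy, smul_smul,
      mul_inv_cancel₀ (by simpa using hy), one_smul]

theorem exists_mul_conjTranspose_eq_one_vecMul_eq {ι κ : Type*} [Fintype ι] [Fintype κ]
    [DecidableEq ι] (hcard : Fintype.card ι ≤ Fintype.card κ) {a : ι → 𝕜} {b : κ → 𝕜}
    (ha : a ≠ 0) (hab : ∑ i, ‖a i‖ ^ 2 = ∑ j, ‖b j‖ ^ 2) :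
    ∃ A : Matrix ι κ 𝕜, A * Aᴴ = 1 ∧ a ᵥ* A = b := by
  obtain ⟨T, hT⟩ := exists_linearIsometry_apply_eq (𝕜 := 𝕜) (E := EuclideanSpace 𝕜 ι)
    (F := EuclideanSpace 𝕜 κ) (x := WithLp.toLp 2 a) (y := WithLp.toLp 2 b) (by simpa)
    (by simpa using ha) (by simp [EuclideanSpace.norm_eq, hab])
  -- The rows of `A` are the images of the standard basis, so `A * Aᴴ` is their Gram matrix.
  let A : Matrix ι κ 𝕜 := of fun i => (T (EuclideanSpace.single i 1)).ofLp
  refine ⟨A, ?_, ?_⟩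
  · ext i i'
    have h := T.inner_map_map (EuclideanSpace.single i' 1) (EuclideanSpace.single i 1)
    rw [EuclideanSpace.inner_eq_star_dotProduct, EuclideanSpace.inner_single_left] at h
    simpa [A, mul_apply, dotProduct, one_apply, Pi.single_apply, eq_comm] using h
  · have ha_sum : WithLp.toLp 2 a = ∑ i, a i • EuclideanSpace.single i 1 := by
      ext j
      simp [Pi.single_apply]
    rw [show b = (T (WithLp.toLp 2 a)).ofLp by rw [hT], ha_sum]
    ext j
    simp [A, vecMul, dotProduct, map_sum, map_smul]

theorem sum_norm_sq_vecMul {ι κ : Type*} [Fintype ι] [Fintype κ] [DecidableEq ι]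
    {A : Matrix ι κ 𝕜} (hA : A * Aᴴ = 1) (z : ι → 𝕜) :
    ∑ j, ‖(z ᵥ* A) j‖ ^ 2 = ∑ i, ‖z i‖ ^ 2 := by
  have h : (z ᵥ* A) ⬝ᵥ star (z ᵥ* A) = z ⬝ᵥ star z := by
    rw [star_vecMul, dotProduct_mulVec, vecMul_vecMul, hA, vecMul_one]
  simpa [dotProduct, RCLike.mul_conj] using congrArg RCLike.re h

end RCLike

theorem exists_vecMul_eq {K ι κ : Type*} [DivisionRing K] [Fintype ι] [DecidableEq ι]
    {a : ι → K} (ha : a ≠ 0) (c : κ → K) : ∃ A : Matrix ι κ K, a ᵥ* A = c := by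
  obtain ⟨i, hi⟩ := Function.ne_iff.mp ha
  exact ⟨vecMulVec (Pi.single i (a i)⁻¹) c, by
    rw [vecMul_vecMulVec, dotProduct_single, mul_inv_cancel₀ hi, one_smul]⟩

theorem Fin.sum_ite_eq_sum_of_val_eq {M : Type*} [AddCommMonoid M] {N b : ℕ} (a : ℕ)
    (P : Fin N → Prop) [DecidablePred P] (hP : ∀ i, P i ↔ a ≤ (i : ℕ) ∧ (i : ℕ) < a + b)
    (e : Fin b → Fin N) (he : ∀ j, (e j : ℕ) = a + j) (f : Fin N → M) :
    (∑ i, if P i then f i else 0) = ∑ j, f (e j) := by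
  rw [← Finset.sum_filter]
  symm
  refine Finset.sum_bij (fun j _ => e j) (fun j _ => ?_) (fun j _ k _ hjk => ?_)
    (fun i hi => ?_) (fun _ _ => rfl)
  · simp only [Finset.mem_filter, Finset.mem_univ, true_and, hP, he]
    omega
  · have := congrArg Fin.val hjk
    rw [he, he] at this
    exact Fin.ext (by omega)
  · simp only [Finset.mem_filter, Finset.mem_univ, true_and, hP] at hi
    exact ⟨⟨i - a, by omega⟩, Finset.mem_univ _, Fin.ext (by rw [he, Fin.val_mk]; omega)⟩

theorem Fin.sum_ite_val_le_eq_sum {M : Type*} [AddCommMonoid M] {n r : ℕ} (hrn : r ≤ n)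
    (f : Fin (n + 1) → M) :
    (∑ i : Fin (n + 1), if (i : ℕ) ≤ r then f i else 0) = ∑ i : Fin (r + 1), f ⟨i, by omega⟩ :=
  Fin.sum_ite_eq_sum_of_val_eq (N := n + 1) (b := r + 1) 0 _ (fun _ => by omega)
    (fun i => ⟨i, by omega⟩) (fun _ => (zero_add _).symm) f

theorem Fin.sum_ite_val_mem_Ioc_eq_sum {M : Type*} [AddCommMonoid M] {n r s : ℕ}
    (hrsn : r + s ≤ n) (f : Fin (n + 1) → M) :
    (∑ i : Fin (n + 1), if r < (i : ℕ) ∧ (i : ℕ) ≤ r + s then f i else 0) =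
      ∑ j : Fin s, f ⟨r + 1 + j, by omega⟩ :=
  Fin.sum_ite_eq_sum_of_val_eq (N := n + 1) (b := s) (r + 1) _ (fun _ => by omega)
    (fun j => ⟨r + 1 + j, by omega⟩) (fun _ => rfl) f

section genBallGraph

variable {n r s : ℕ} (A₁ : Matrix (Fin (r + 1)) (Fin s) ℂ)
  (A₂ : Matrix (Fin (r + 1)) (Fin (n - r - s)) ℂ) (z : Fin (r + 1) → ℂ)

theorem genBallGraphVec_apply_head {i : Fin (n + 1)} {k : Fin (r + 1)} (hik : (i : ℕ) = k) :
    genBallGraphVec n r s A₁ A₂ z i = z k := by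
  rw [genBallGraphVec, dif_pos (by omega)]
  congr

theorem genBallGraphVec_apply_mid {i : Fin (n + 1)} {j : Fin s} (hij : (i : ℕ) = r + 1 + j) :
    genBallGraphVec n r s A₁ A₂ z i = (z ᵥ* A₁) j := by
  have := j.isLt
  rw [genBallGraphVec, dif_neg (by omega), dif_pos (by omega)]
  exact congrArg _ (Fin.ext (by simp only; omega))

theorem eq_genBallGraphVec_of_forall {w : Fin (n + 1) → ℂ}
    (h₀ : ∀ (i : Fin (n + 1)) (k : Fin (r + 1)), (i : ℕ) = k → w i = z k)
    (h₁ : ∀ (i : Fin (n + 1)) (j : Fin s), (i : ℕ) = r + 1 + j → w i = (z ᵥ* A₁) j)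
    (h₂ : ∀ (i : Fin (n + 1)) (j : Fin (n - r - s)), (i : ℕ) = r + s + 1 + j →
      w i = (z ᵥ* A₂) j) :
    w = genBallGraphVec n r s A₁ A₂ z := by
  funext i
  unfold genBallGraphVec
  split_ifs with hr hrs
  · exact h₀ i ⟨i, by omega⟩ rfl
  · exact h₁ i ⟨i - (r + 1), by omega⟩ (by simp only; omega)
  · exact h₂ i ⟨i - (r + s + 1), by omega⟩ (by simp only; omega)

noncomputable def genBallGraphLin : (Fin (r + 1) → ℂ) →ₗ[ℂ] (Fin (n + 1) → ℂ) where
  toFun := genBallGraphVec n r s A₁ A₂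
  map_add' z w := by
    funext i
    simp only [genBallGraphVec, Pi.add_apply, add_vecMul]
    split_ifs <;> rfl
  map_smul' c z := by
    funext i
    simp only [genBallGraphVec, Pi.smul_apply, RingHom.id_apply, smul_vecMul]
    split_ifs <;> rfl

@[simp]
theorem genBallGraphLin_apply : genBallGraphLin A₁ A₂ z = genBallGraphVec n r s A₁ A₂ z :=
  rfl

theorem genBallGraphLin_injective (hrn : r ≤ n) :
    Function.Injective (genBallGraphLin (n := n) A₁ A₂) := by
  intro z w h
  funext i
  have := congrFun h ⟨i, by omega⟩
  rwa [genBallGraphLin_apply, genBallGraphLin_apply,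
    genBallGraphVec_apply_head A₁ A₂ z (k := i) rfl,
    genBallGraphVec_apply_head A₁ A₂ w (k := i) rfl] at this

end genBallGraph

theorem stmt_14 (n r s : ℕ) (hrs : r < s) (hrsn : r + s ≤ n)
    (p : Fin (n + 1) → ℂ)
    (hpeq : (∑ i : Fin (n + 1), if (i : ℕ) ≤ r then ‖p i‖ ^ 2 else 0) =
      ∑ i : Fin (n + 1), if r < (i : ℕ) ∧ (i : ℕ) ≤ r + s then ‖p i‖ ^ 2 else 0)
    (hp1 : (fun i : Fin (r + 1) => p ⟨(i : ℕ), by have := i.isLt; omega⟩) ≠ 0) :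
    ∃ (A₁ : Matrix (Fin (r + 1)) (Fin s) ℂ)
      (A₂ : Matrix (Fin (r + 1)) (Fin (n - r - s)) ℂ),
      A₁ * A₁ᴴ = 1 ∧
      p = genBallGraphVec n r s A₁ A₂
        (fun i : Fin (r + 1) => p ⟨(i : ℕ), by have := i.isLt; omega⟩) ∧
      ∃ W : Submodule ℂ (Fin (n + 1) → ℂ),
        (W : Set (Fin (n + 1) → ℂ)) =
          {w | ∃ z : Fin (r + 1) → ℂ, w = genBallGraphVec n r s A₁ A₂ z} ∧
        Module.finrank ℂ W = r + 1 ∧ p ∈ W ∧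
        ∀ w ∈ W, (∑ i : Fin (n + 1), if (i : ℕ) ≤ r then ‖w i‖ ^ 2 else 0) =
          ∑ i : Fin (n + 1), if r < (i : ℕ) ∧ (i : ℕ) ≤ r + s then ‖w i‖ ^ 2 else 0 := by
  set p₁ : Fin (r + 1) → ℂ := fun i => p ⟨i, by omega⟩
  rw [Fin.sum_ite_val_le_eq_sum (by omega), Fin.sum_ite_val_mem_Ioc_eq_sum hrsn] at hpeq
  obtain ⟨A₁, hA₁, hp₂⟩ := exists_mul_conjTranspose_eq_one_vecMul_eq (by simpa using hrs) hp1 hpeq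
  obtain ⟨A₂, hp₃⟩ := exists_vecMul_eq hp1 fun j : Fin (n - r - s) => p ⟨r + s + 1 + j, by omega⟩
  have hp : p = genBallGraphVec n r s A₁ A₂ p₁ := eq_genBallGraphVec_of_forall A₁ A₂ p₁
    (fun i k hik => congrArg p (Fin.ext hik))
    (fun i j hij => by rw [hp₂]; exact congrArg p (Fin.ext hij))
    (fun i j hij => by rw [hp₃]; exact congrArg p (Fin.ext hij))
  refine ⟨A₁, A₂, hA₁, hp, LinearMap.range (genBallGraphLin A₁ A₂), ?_, ?_, ⟨p₁, hp.symm⟩, ?_⟩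
  · ext w
    simp [eq_comm]
  · rw [LinearMap.finrank_range_of_inj (genBallGraphLin_injective A₁ A₂ (by omega)),
      finrank_fin_fun]
  · rintro _ ⟨z, rfl⟩
    have head : ∀ i : Fin (r + 1), genBallGraphVec n r s A₁ A₂ z ⟨i, by omega⟩ = z i :=
      fun _ => genBallGraphVec_apply_head A₁ A₂ z rfl
    have mid : ∀ j : Fin s, genBallGraphVec n r s A₁ A₂ z ⟨r + 1 + j, by omega⟩ = (z ᵥ* A₁) j :=
      fun _ => genBallGraphVec_apply_mid A₁ A₂ z rfl
    rw [Fin.sum_ite_val_le_eq_sum (by omega), Fin.sum_ite_val_mem_Ioc_eq_sum hrsn]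
    simp only [genBallGraphLin_apply, head, mid, sum_norm_sq_vecMul hA₁]
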